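/- arXiv:2012.14407 — 3 statements merged into one kernel-verified Lean document; each statement's English description precedes it below -/
import Mathlib

section
/- Let P be an exponentially localized orthogonal projection on L²(ℝ²) with kernel bound |P(x,y)| ≤ C e^{−β‖x−y‖}, and let {w_{γ,a}}_{γ∈𝔇, 1≤a≤m(γ)} be a generalized Wannier basis for P, G-localized around an r-uniformly discrete set 𝔇 ⊂ ℝ², with localization function G(‖x‖) = e^{2α‖x‖} for some 0 < α < β. Then for each i ∈ {1,2} and each x, y ∈ ℝ² the series Γ_i(x,y) = ∑_{γ∈𝔇} ∑_{1≤a≤m(γ)} γ_i w_{γ,a}(x) conj(w_{γ,a}(y)) converges absolutely, and there exist constants C₀, C₀' > 0 and 0 < β' < α such that |Γ_i(x,y)| ≤ C₀ e^{−β'‖x−y‖} + C₀' |x_i| e^{−β'‖x−y‖} for all x, y ∈ ℝ². -/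
open MeasureTheory Filter Topology

noncomputable section

abbrev R2 : Type := EuclideanSpace ℝ (Fin 2)

abbrev H2 : Type := MeasureTheory.Lp ℂ 2 (volume : Measure R2)

/-- `T` is an integral operator with kernel `k`. -/
def HasKernel (T : H2 →L[ℂ] H2) (k : R2 → R2 → ℂ) : Prop :=
  ∀ f : H2, ∀ᵐ x : R2 ∂volume, (T f : R2 → ℂ) x = ∫ y : R2, k x y * (f : R2 → ℂ) y

/-- `P` is an orthogonal projection. -/
def IsOrthProj (P : H2 →L[ℂ] H2) : Prop := IsSelfAdjoint P ∧ P ∘L P = P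

/-- `p` is a jointly continuous, exponentially localized kernel with constants `C`, `β`. -/
def IsExpLocKernel (p : R2 → R2 → ℂ) (C β : ℝ) : Prop :=
  Continuous (fun q : R2 × R2 => p q.1 q.2) ∧ 0 < C ∧ 0 < β ∧
    ∀ x y : R2, ‖p x y‖ ≤ C * Real.exp (-β * ‖x - y‖)

/-- Hilbert-Schmidt operators on `L²(ℝ²)`. -/
def IsHilbertSchmidt (T : H2 →L[ℂ] H2) : Prop :=
  ∃ (w : Set H2) (b : HilbertBasis w ℂ H2), Summable fun i => ‖T (b i)‖ ^ 2

/-- Trace class operators, characterized as products of two Hilbert-Schmidt operators. -/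
def IsTraceClass (T : H2 →L[ℂ] H2) : Prop :=
  ∃ A B : H2 →L[ℂ] H2, IsHilbertSchmidt A ∧ IsHilbertSchmidt B ∧ T = A ∘L B

def traceBasisIdx : Set H2 := (exists_hilbertBasis ℂ H2).choose

def traceBasis : HilbertBasis traceBasisIdx ℂ H2 := (exists_hilbertBasis ℂ H2).choose_spec.choose

/-- The trace of an operator, computed in a fixed Hilbert basis of `L²(ℝ²)`.
For trace class operators this is the canonical trace for any choice of basis. -/
def opTrace (T : H2 →L[ℂ] H2) : ℂ :=
  ∑' i : traceBasisIdx, (inner ℂ (traceBasis i) (T (traceBasis i)) : ℂ)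

/-- The square `Λ_L = [-L, L]²` in `ℝ²`. -/
def Lam (L : ℝ) : Set R2 := {x : R2 | |x 0| ≤ L ∧ |x 1| ≤ L}

/-- The characteristic function of `Λ_L`, with values in `ℂ`. -/
def indL (L : ℝ) (x : R2) : ℂ := (Lam L).indicator (fun _ => (1 : ℂ)) x

/-- Formal composition of two integral kernels. -/
def kComp (k₁ k₂ : R2 → R2 → ℂ) : R2 → R2 → ℂ := fun x y => ∫ z : R2, k₁ x z * k₂ z y

/-- The kernel of the commutator `[X_i, P]`, when `P` has kernel `p`. -/
def commK (p : R2 → R2 → ℂ) (i : Fin 2) : R2 → R2 → ℂ :=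
  fun x y => ((x i - y i : ℝ) : ℂ) * p x y

/-- The kernel of the double commutator `[[X₁,P],[X₂,P]]`, when `P` has kernel `p`. -/
def dcommK (p : R2 → R2 → ℂ) : R2 → R2 → ℂ :=
  fun x y => kComp (commK p 0) (commK p 1) x y - kComp (commK p 1) (commK p 0) x y

/-- The kernel of `i χ_{Λ_L} P [[X₁,P],[X₂,P]] P χ_{Λ_L}`, when `P` has kernel `p`. -/
def chernK (p : R2 → R2 → ℂ) (L : ℝ) : R2 → R2 → ℂ :=
  fun x y => indL L x * (Complex.I * kComp p (kComp (dcommK p) p) x y) * indL L y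

/-- A set `𝔇 ⊆ ℝ²` is `r`-uniformly discrete. -/
def UnifDiscrete (𝔇 : Set R2) (r : ℝ) : Prop :=
  0 < r ∧ ∀ x : R2, (𝔇 ∩ Metric.ball x r).Subsingleton

/-- The index set of a generalized Wannier basis. -/
abbrev WIdx (𝔇 : Set R2) (m : R2 → ℕ) : Type := Σ γ : 𝔇, Fin (m (γ : R2))

/-- `w` is a generalized Wannier basis for `P`, `G`-localized around `𝔇`
with localization constant `M` and uniform multiplicity bound `mStar`. -/
def IsGWB (P : H2 →L[ℂ] H2) (𝔇 : Set R2) (m : R2 → ℕ) (mStar : ℕ)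
    (w : (γ : R2) → Fin (m γ) → H2) (G : ℝ → ℝ) (M : ℝ) : Prop :=
  (∀ γ ∈ 𝔇, m γ ≤ mStar) ∧
  Orthonormal ℂ (fun σ : WIdx 𝔇 m => w (σ.1 : R2) σ.2) ∧
  (∀ γ ∈ 𝔇, ∀ a, P (w γ a) = w γ a) ∧
  (∀ f : H2, P f = f → (∀ (γ : R2), γ ∈ 𝔇 → ∀ a, (inner ℂ (w γ a) f : ℂ) = 0) → f = 0) ∧
  (∀ γ ∈ 𝔇, ∀ a, ∫⁻ x : R2,
      (‖(w γ a : R2 → ℂ) x‖₊ : ENNReal) ^ 2 * ENNReal.ofReal (G ‖x - γ‖)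
      ≤ ENNReal.ofReal M)

/-- The Japanese bracket `⟨x⟩ = (1+‖x‖²)^{1/2}` on `ℝ²`. -/
def jap (x : R2) : ℝ := Real.sqrt (1 + ‖x‖ ^ 2)

/-- The Japanese bracket `⟨t⟩ = (1+t²)^{1/2}` on `ℝ`. -/
def japR (t : ℝ) : ℝ := Real.sqrt (1 + t ^ 2)

/-! Each term of the series is bounded by `K² (|x_i| + ‖x - γ‖) e^{-α‖x-γ‖} e^{-α‖y-γ‖}`, since
`|γ_i| ≤ |x_i| + ‖x - γ‖`. Half of the decay in `‖x - γ‖` and `‖y - γ‖` is spent, through the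
triangle inequality, on the factor `e^{-(α/2)‖x-y‖}`; part of the rest absorbs the linear factor
`‖x - γ‖`, and what remains, `e^{-(α/4)‖x-γ‖}`, is summable over the uniformly discrete set `𝔇`
uniformly in `x`: the disjoint balls `B(γ, r/2)` compare the sum with `∫ e^{-(α/4)‖x-y‖} dy`. -/

section Packing

variable {E : Type*} [NormedAddCommGroup E] [NormedSpace ℝ E] [FiniteDimensional ℝ E]
  [MeasurableSpace E] [BorelSpace E]

theorem integrable_exp_neg_mul_norm [Nontrivial E] (μ : Measure E) [μ.IsAddHaarMeasure]
    {c : ℝ} (hc : 0 < c) : Integrable (fun y : E => Real.exp (-c * ‖y‖)) μ := by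
  rw [integrable_fun_norm_addHaar μ (f := fun t => Real.exp (-c * t))]
  refine (integrableOn_rpow_mul_exp_neg_mul_rpow (s := (Module.finrank ℝ E - 1 : ℕ))
    (by linarith [(Nat.cast_nonneg _ : (0 : ℝ) ≤ (Module.finrank ℝ E - 1 : ℕ))]) one_pos
    hc).congr_fun (fun t _ => ?_) measurableSet_Ioi
  simp [Real.rpow_natCast]

theorem Real.exp_neg_mul_dist_le_of_mem_ball {X : Type*} [PseudoMetricSpace X] {c ρ : ℝ}
    (hc : 0 ≤ c) {x y γ : X} (hy : y ∈ Metric.ball γ ρ) :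
    Real.exp (-c * dist x γ) ≤ Real.exp (c * ρ) * Real.exp (-c * dist x y) := by
  rw [← Real.exp_add, Real.exp_le_exp]
  nlinarith [dist_triangle x γ y, Metric.mem_ball'.1 hy]

theorem sum_exp_neg_mul_dist_le [Nontrivial E] (μ : Measure E) [μ.IsAddHaarMeasure]
    {𝔇 : Set E} {r c : ℝ} (hc : 0 < c) (hsep : 𝔇.Pairwise fun γ γ' => r ≤ dist γ γ')
    (x : E) (u : Finset 𝔇) :
    μ.real (Metric.ball 0 (r / 2)) * ∑ γ ∈ u, Real.exp (-c * dist x γ) ≤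
      Real.exp (c * (r / 2)) * ∫ y, Real.exp (-c * ‖y‖) ∂μ := by
  set g : E → ℝ := fun y => Real.exp (c * (r / 2)) * Real.exp (-c * dist x y)
  have hg : Integrable g μ := by
    simpa only [g, dist_eq_norm] using
      ((integrable_exp_neg_mul_norm μ hc).comp_sub_left x).const_mul (Real.exp (c * (r / 2)))
  have hdisj : Set.Pairwise (u : Set 𝔇)
      (Function.onFun Disjoint fun γ : 𝔇 => Metric.ball (γ : E) (r / 2)) :=
    fun γ _ γ' _ hne => Metric.ball_disjoint_ball (by
      linarith [hsep γ.2 γ'.2 (Subtype.coe_injective.ne hne)] : r / 2 + r / 2 ≤ dist (γ : E) γ')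
  calc μ.real (Metric.ball 0 (r / 2)) * ∑ γ ∈ u, Real.exp (-c * dist x γ)
      = ∑ γ ∈ u, ∫ _ in Metric.ball (γ : E) (r / 2), Real.exp (-c * dist x γ) ∂μ := by
        simp [Finset.mul_sum, Measure.real, Measure.addHaar_ball_center]
    _ ≤ ∑ γ ∈ u, ∫ y in Metric.ball (γ : E) (r / 2), g y ∂μ :=
        Finset.sum_le_sum fun γ _ =>
          setIntegral_mono_on (integrableOn_const measure_ball_lt_top.ne) hg.integrableOn
            Metric.isOpen_ball.measurableSet
            fun y hy => Real.exp_neg_mul_dist_le_of_mem_ball hc.le hy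
    _ = ∫ y in ⋃ γ ∈ u, Metric.ball (γ : E) (r / 2), g y ∂μ :=
        (integral_biUnion_finset u (fun _ _ => Metric.isOpen_ball.measurableSet) hdisj
          fun _ _ => hg.integrableOn).symm
    _ ≤ ∫ y, g y ∂μ := setIntegral_le_integral hg (.of_forall fun y => by positivity)
    _ = Real.exp (c * (r / 2)) * ∫ y, Real.exp (-c * ‖y‖) ∂μ := by
        rw [integral_const_mul]
        congr 1
        simpa [dist_eq_norm] using integral_sub_left_eq_self (fun y => Real.exp (-c * ‖y‖)) μ x

theorem exists_tsum_exp_neg_mul_dist_le [Nontrivial E] {𝔇 : Set E} {r c : ℝ} (hr : 0 < r)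
    (hc : 0 < c) (hsep : 𝔇.Pairwise fun γ γ' => r ≤ dist γ γ') :
    ∃ A : ℝ, 0 < A ∧ ∀ x : E, Summable (fun γ : 𝔇 => Real.exp (-c * dist x γ)) ∧
      ∑' γ : 𝔇, Real.exp (-c * dist x γ) ≤ A := by
  let μ : Measure E := Measure.addHaar
  have hV : 0 < μ.real (Metric.ball 0 (r / 2)) :=
    ENNReal.toReal_pos (Metric.measure_ball_pos μ 0 (half_pos hr)).ne' measure_ball_lt_top.ne
  have hI : 0 < ∫ y, Real.exp (-c * ‖y‖) ∂μ := integral_exp_pos (integrable_exp_neg_mul_norm μ hc)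
  refine ⟨Real.exp (c * (r / 2)) * (∫ y, Real.exp (-c * ‖y‖) ∂μ) / μ.real (Metric.ball 0 (r / 2)),
    by positivity, fun x => ?_⟩
  have hsum (u : Finset 𝔇) : ∑ γ ∈ u, Real.exp (-c * dist x γ) ≤
      Real.exp (c * (r / 2)) * (∫ y, Real.exp (-c * ‖y‖) ∂μ) / μ.real (Metric.ball 0 (r / 2)) := by
    rw [le_div_iff₀ hV, mul_comm]
    exact sum_exp_neg_mul_dist_le μ hc hsep x u
  exact ⟨summable_of_sum_le (fun _ => (Real.exp_pos _).le) hsum,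
    Real.tsum_le_of_sum_le (fun _ => (Real.exp_pos _).le) hsum⟩

end Packing

theorem UnifDiscrete.pairwise_le_dist {𝔇 : Set R2} {r : ℝ} (h : UnifDiscrete 𝔇 r) :
    𝔇.Pairwise fun γ γ' => r ≤ dist γ γ' := by
  intro γ hγ γ' hγ' hne
  by_contra! hlt
  exact hne (h.2 γ ⟨hγ, Metric.mem_ball_self h.1⟩ ⟨hγ', Metric.mem_ball'.2 hlt⟩)

theorem summable_and_tsum_le_of_le_sigma_fin {α : Type*} {m : α → ℕ} {N : ℕ}
    (hm : ∀ a, m a ≤ N) {f : (Σ a, Fin (m a)) → ℝ} {g : α → ℝ} (hf : 0 ≤ f) (hg : 0 ≤ g)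
    (hfg : ∀ σ, f σ ≤ g σ.1) (hgs : Summable g) :
    Summable f ∧ ∑' σ, f σ ≤ N * ∑' a, g a := by
  have hfiber (a : α) : ∑' _ : Fin (m a), g a = m a * g a := by simp
  have hmg : Summable fun a => (m a : ℝ) * g a :=
    (hgs.mul_left (N : ℝ)).of_nonneg_of_le (fun a => mul_nonneg (Nat.cast_nonneg _) (hg a))
      fun a => mul_le_mul_of_nonneg_right (Nat.cast_le.2 (hm a)) (hg a)
  have hgσ : Summable fun σ : Σ a, Fin (m a) => g σ.1 :=
    (summable_sigma_of_nonneg fun σ => hg σ.1).2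
      ⟨fun a => (hasSum_fintype _).summable, by simpa only [hfiber] using hmg⟩
  have hfs : Summable f := hgσ.of_nonneg_of_le hf hfg
  refine ⟨hfs, ?_⟩
  calc ∑' σ, f σ ≤ ∑' σ : Σ a, Fin (m a), g σ.1 := hfs.tsum_le_tsum hfg hgσ
    _ = ∑' a, (m a : ℝ) * g a := by rw [hgσ.tsum_sigma]; simp only [hfiber]
    _ ≤ ∑' a, (N : ℝ) * g a :=
        hmg.tsum_le_tsum (fun a => mul_le_mul_of_nonneg_right (Nat.cast_le.2 (hm a)) (hg a))
          (hgs.mul_left (N : ℝ))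
    _ = N * ∑' a, g a := tsum_mul_left

theorem Real.mul_exp_neg_mul_le_inv {a : ℝ} (ha : 0 < a) (t : ℝ) :
    t * Real.exp (-a * t) ≤ a⁻¹ := by
  rw [neg_mul, Real.exp_neg, ← div_eq_mul_inv, div_le_iff₀ (Real.exp_pos _), ← div_eq_inv_mul,
    le_div_iff₀ ha]
  linarith [Real.add_one_le_exp (a * t)]

theorem add_mul_exp_neg_two_mul_le {a A X : ℝ} (ha : 0 < a) (hA : 0 ≤ A) (hX : 0 ≤ X) :
    (A + X) * Real.exp (-(2 * a) * X) ≤ (A + a⁻¹) * Real.exp (-a * X) := by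
  have hsplit : Real.exp (-(2 * a) * X) = Real.exp (-a * X) * Real.exp (-a * X) := by
    rw [← Real.exp_add]; ring_nf
  have hA' : A * Real.exp (-a * X) ≤ A :=
    mul_le_of_le_one_right hA (Real.exp_le_one_iff.2 (by nlinarith))
  have hsum := add_le_add hA' (Real.mul_exp_neg_mul_le_inv ha X)
  rw [hsplit]
  nlinarith [mul_le_mul_of_nonneg_right hsum (Real.exp_pos (-a * X)).le]

theorem exp_neg_mul_mul_exp_neg_mul_le {a X Y Z : ℝ} (ha : 0 ≤ a) (hY : 0 ≤ Y)
    (hZ : Z ≤ X + Y) :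
    Real.exp (-a * X) * Real.exp (-a * Y) ≤ Real.exp (-(a / 2) * Z) * Real.exp (-(a / 2) * X) := by
  rw [← Real.exp_add, ← Real.exp_add, Real.exp_le_exp]
  nlinarith

theorem EuclideanSpace.abs_apply_le_abs_apply_add_norm_sub {ι : Type*} [Fintype ι]
    (x γ : EuclideanSpace ℝ ι) (i : ι) : |γ i| ≤ |x i| + ‖x - γ‖ := by
  have h := PiLp.norm_apply_le (x - γ) i
  rw [PiLp.sub_apply, Real.norm_eq_abs] at h
  linarith [abs_sub_abs_le_abs_sub (γ i) (x i), abs_sub_comm (γ i) (x i)]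

theorem norm_apply_mul_mul_conj_le {ι : Type*} [Fintype ι] {α K : ℝ} (hα : 0 < α)
    {x y γ : EuclideanSpace ℝ ι} (i : ι) {u v : ℂ}
    (hu : ‖u‖ ≤ K * Real.exp (-α * ‖x - γ‖)) (hv : ‖v‖ ≤ K * Real.exp (-α * ‖y - γ‖)) :
    ‖((γ i : ℝ) : ℂ) * u * (starRingEnd ℂ) v‖ ≤
      K ^ 2 * (|x i| + 4 / α) * Real.exp (-(α / 2) * ‖x - y‖) *
        Real.exp (-(α / 4) * dist x γ) := by
  have hK : 0 ≤ K := nonneg_of_mul_nonneg_left ((norm_nonneg u).trans hu) (Real.exp_pos _)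
  have hxy : ‖x - y‖ ≤ ‖x - γ‖ + ‖y - γ‖ := norm_sub_le_norm_sub_add_norm_sub x γ y |>.trans
    (by rw [norm_sub_rev γ y])
  have hdecay := add_mul_exp_neg_two_mul_le (a := α / 4) (by positivity) (abs_nonneg (x i))
    (norm_nonneg (x - γ))
  rw [norm_mul, norm_mul, Complex.norm_real, Real.norm_eq_abs, RCLike.norm_conj, dist_eq_norm]
  calc |γ i| * ‖u‖ * ‖v‖
      ≤ (|x i| + ‖x - γ‖) * (K * Real.exp (-α * ‖x - γ‖)) * (K * Real.exp (-α * ‖y - γ‖)) := by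
        gcongr
        exact EuclideanSpace.abs_apply_le_abs_apply_add_norm_sub x γ i
    _ = K ^ 2 * (|x i| + ‖x - γ‖) *
          (Real.exp (-α * ‖x - γ‖) * Real.exp (-α * ‖y - γ‖)) := by ring
    _ ≤ K ^ 2 * (|x i| + ‖x - γ‖) *
          (Real.exp (-(α / 2) * ‖x - y‖) * Real.exp (-(2 * (α / 4)) * ‖x - γ‖)) := by
        refine mul_le_mul_of_nonneg_left ?_ (by positivity)
        simpa only [show 2 * (α / 4) = α / 2 by ring] using
          exp_neg_mul_mul_exp_neg_mul_le hα.le (norm_nonneg (y - γ)) hxy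
    _ ≤ K ^ 2 * (|x i| + 4 / α) * Real.exp (-(α / 2) * ‖x - y‖) *
          Real.exp (-(α / 4) * ‖x - γ‖) := by
        rw [inv_div] at hdecay
        nlinarith [mul_le_mul_of_nonneg_left hdecay
          (by positivity : 0 ≤ K ^ 2 * Real.exp (-(α / 2) * ‖x - y‖))]

theorem statement_7_general
    (P : H2 →L[ℂ] H2)
    (𝔇 : Set R2) (r : ℝ) (h𝔇 : UnifDiscrete 𝔇 r)
    (α : ℝ) (hα0 : 0 < α)
    (m : R2 → ℕ) (mStar : ℕ) (w : (γ : R2) → Fin (m γ) → H2) (M : ℝ)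
    (hGWB : IsGWB P 𝔇 m mStar w (fun t => Real.exp (2 * α * t)) M)
    -- pointwise bound on the continuous representatives of the GWFs:
    (K : ℝ) (hK : 0 < K)
    (hptw : ∀ γ ∈ 𝔇, ∀ a, ∀ x : R2,
      ‖(w γ a : R2 → ℂ) x‖ ≤ K * Real.exp (-α * ‖x - γ‖))
    (i : Fin 2) :
    (∀ x y : R2, Summable (fun σ : WIdx 𝔇 m =>
      ‖(((σ.1 : R2) i : ℝ) : ℂ) * (w (σ.1 : R2) σ.2 : R2 → ℂ) x *
        (starRingEnd ℂ) ((w (σ.1 : R2) σ.2 : R2 → ℂ) y)‖)) ∧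
    ∃ β' C₀ C₀' : ℝ, 0 < β' ∧ β' < α ∧ 0 < C₀ ∧ 0 < C₀' ∧
      ∀ x y : R2,
        ‖∑' σ : WIdx 𝔇 m,
            (((σ.1 : R2) i : ℝ) : ℂ) * (w (σ.1 : R2) σ.2 : R2 → ℂ) x *
              (starRingEnd ℂ) ((w (σ.1 : R2) σ.2 : R2 → ℂ) y)‖
          ≤ C₀ * Real.exp (-β' * ‖x - y‖) + C₀' * |x i| * Real.exp (-β' * ‖x - y‖) := by
  obtain ⟨A, hA0, hA⟩ := exists_tsum_exp_neg_mul_dist_le h𝔇.1 (by positivity : 0 < α / 4)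
    h𝔇.pairwise_le_dist
  have hseries (x y : R2) := summable_and_tsum_le_of_le_sigma_fin (α := 𝔇) (m := fun γ => m γ)
    (f := fun σ : WIdx 𝔇 m => ‖(((σ.1 : R2) i : ℝ) : ℂ) * (w (σ.1 : R2) σ.2 : R2 → ℂ) x *
      (starRingEnd ℂ) ((w (σ.1 : R2) σ.2 : R2 → ℂ) y)‖)
    (fun γ => hGWB.1 γ γ.2) (fun _ => norm_nonneg _) (fun _ => by positivity)
    (fun σ => norm_apply_mul_mul_conj_le hα0 i (hptw _ σ.1.2 _ x) (hptw _ σ.1.2 _ y))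
    ((hA x).1.mul_left _)
  refine ⟨fun x y => (hseries x y).1, α / 2, (mStar + 1) * K ^ 2 * A * (4 / α),
    (mStar + 1) * K ^ 2 * A, by positivity, by linarith, by positivity, by positivity,
    fun x y => ?_⟩
  calc _ ≤ mStar * (K ^ 2 * (|x i| + 4 / α) * Real.exp (-(α / 2) * ‖x - y‖) *
          ∑' γ : 𝔇, Real.exp (-(α / 4) * dist x γ)) := by
        rw [← tsum_mul_left]
        exact (norm_tsum_le_tsum_norm (hseries x y).1).trans (hseries x y).2
    _ ≤ (mStar + 1) * (K ^ 2 * (|x i| + 4 / α) * Real.exp (-(α / 2) * ‖x - y‖) * A) := by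
        gcongr
        · linarith
        · exact (hA x).2
    _ = _ := by ring

/-- kernel estimate for the operators `Γ_i`, exponential case. For a GWB of an
exponentially localized projection, `G`-localized around an `r`-uniformly discrete set with
`G(‖x‖) = e^{2α‖x‖}`, `α < β`, the series defining the kernel of `Γ_i` converges absolutely
and satisfies `|Γ_i(x,y)| ≤ C₀ e^{-β'‖x-y‖} + C₀' |x_i| e^{-β'‖x-y‖}` for some `0 < β' < α`. -/
theorem statement_7
    (P : H2 →L[ℂ] H2) (hP : IsOrthProj P)
    (p : R2 → R2 → ℂ) (C β : ℝ) (hp : IsExpLocKernel p C β) (hker : HasKernel P p)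
    (𝔇 : Set R2) (r : ℝ) (h𝔇 : UnifDiscrete 𝔇 r)
    (α : ℝ) (hα0 : 0 < α) (hαβ : α < β)
    (m : R2 → ℕ) (mStar : ℕ) (w : (γ : R2) → Fin (m γ) → H2) (M : ℝ)
    (hGWB : IsGWB P 𝔇 m mStar w (fun t => Real.exp (2 * α * t)) M)
    -- pointwise bound on the continuous representatives of the GWFs:
    (K : ℝ) (hK : 0 < K)
    (hptw : ∀ γ ∈ 𝔇, ∀ a, ∀ x : R2,
      ‖(w γ a : R2 → ℂ) x‖ ≤ K * Real.exp (-α * ‖x - γ‖))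
    (i : Fin 2) :
    (∀ x y : R2, Summable (fun σ : WIdx 𝔇 m =>
      ‖(((σ.1 : R2) i : ℝ) : ℂ) * (w (σ.1 : R2) σ.2 : R2 → ℂ) x *
        (starRingEnd ℂ) ((w (σ.1 : R2) σ.2 : R2 → ℂ) y)‖)) ∧
    ∃ β' C₀ C₀' : ℝ, 0 < β' ∧ β' < α ∧ 0 < C₀ ∧ 0 < C₀' ∧
      ∀ x y : R2,
        ‖∑' σ : WIdx 𝔇 m,
            (((σ.1 : R2) i : ℝ) : ℂ) * (w (σ.1 : R2) σ.2 : R2 → ℂ) x *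
              (starRingEnd ℂ) ((w (σ.1 : R2) σ.2 : R2 → ℂ) y)‖
          ≤ C₀ * Real.exp (-β' * ‖x - y‖) + C₀' * |x i| * Real.exp (-β' * ‖x - y‖) :=
  statement_7_general P 𝔇 r h𝔇 α hα0 m mStar w M hGWB K hK hptw i
end
end

section
/- Let P be an exponentially localized orthogonal projection on L²(ℝ²), and let {w_{γ,a}}_{γ∈𝔇, 1≤a≤m(γ)} be a generalized Wannier basis for P, G-localized around an r-uniformly discrete set 𝔇 ⊂ ℝ², with localization function G(‖x‖) = ⟨x⟩^{2s} for some s > 3/2. Then for each i ∈ {1,2} and each x, y ∈ ℝ² the series Γ_i(x,y) = ∑_{γ∈𝔇} ∑_{1≤a≤m(γ)} γ_i w_{γ,a}(x) conj(w_{γ,a}(y)) converges absolutely, and for every 0 < ε < s − 3/2 there exist constants C₀, C₀' > 0 such that |Γ_i(x,y)| ≤ C₀ ⟨x−y⟩^{−(s−3/2−ε)} + C₀' |x_i| ⟨x−y⟩^{−(s−1−ε)} for all x, y ∈ ℝ². -/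
open MeasureTheory Filter Topology

noncomputable section

/-!
With `u = ⟨x - γ⟩` and `v = ⟨y - γ⟩`, the term of index `(γ, a)` is at most
`K² (|x_i| + u) u^{-s} v^{-s}`, because `|γ_i| ≤ |x_i| + u`. Peetre's inequality
`⟨x - y⟩ ≤ √2 u v` turns a common power `(u v)^{-c}` into `⟨x - y⟩^{-c}`, and what is left,
`u^{-a} v^{-b}` with `a + b = 2 + 2ε > 2`, is at most `u^{-(a+b)} + v^{-(a+b)}`. Because `𝔇` is
uniformly discrete, `∑_γ ⟨x - γ⟩^{-t}` is bounded uniformly in `x` for `t > 2`, and the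
multiplicities are at most `m_*`.
-/

open Module Metric

theorem rpow_neg_le_mul_rpow_neg_of_le_mul {a b c t : ℝ} (ha : 0 < a) (hb : 0 ≤ b) (hc : 0 < c)
    (ht : 0 ≤ t) (h : a ≤ c * b) : b ^ (-t) ≤ c ^ t * a ^ (-t) :=
  calc b ^ (-t) = c ^ t * (c * b) ^ (-t) := by
        rw [Real.mul_rpow hc.le hb, ← mul_assoc, ← Real.rpow_add hc, add_neg_cancel,
          Real.rpow_zero, one_mul]
    _ ≤ c ^ t * a ^ (-t) := by
        have := Real.rpow_le_rpow_of_nonpos ha h (neg_nonpos.2 ht)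
        gcongr

theorem rpow_neg_mul_rpow_neg_le_add {u v a b : ℝ} (hu : 1 ≤ u) (hv : 1 ≤ v) (ha : 0 ≤ a)
    (hb : 0 ≤ b) : u ^ (-a) * v ^ (-b) ≤ u ^ (-(a + b)) + v ^ (-(a + b)) := by
  have hu0 : 0 < u := one_pos.trans_le hu
  have hv0 : 0 < v := one_pos.trans_le hv
  rcases le_total u v with huv | hvu
  · calc u ^ (-a) * v ^ (-b) ≤ u ^ (-a) * u ^ (-b) :=
          mul_le_mul_of_nonneg_left
            (Real.rpow_le_rpow_of_nonpos hu0 huv (neg_nonpos.2 hb)) (by positivity)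
      _ = u ^ (-(a + b)) := by rw [← Real.rpow_add hu0, neg_add]
      _ ≤ _ := le_add_of_nonneg_right (by positivity)
  · calc u ^ (-a) * v ^ (-b) ≤ v ^ (-a) * v ^ (-b) :=
          mul_le_mul_of_nonneg_right
            (Real.rpow_le_rpow_of_nonpos hv0 hvu (neg_nonpos.2 ha)) (by positivity)
      _ = v ^ (-(a + b)) := by rw [← Real.rpow_add hv0, neg_add]
      _ ≤ _ := le_add_of_nonneg_left (by positivity)

theorem rpow_neg_add_mul_rpow_neg_add_le {u v J k a b c : ℝ} (hu : 1 ≤ u) (hv : 1 ≤ v)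
    (hJ : 0 < J) (hk : 0 < k) (hJuv : J ≤ k * (u * v)) (ha : 0 ≤ a) (hb : 0 ≤ b) (hc : 0 ≤ c) :
    u ^ (-(c + a)) * v ^ (-(c + b)) ≤ k ^ c * J ^ (-c) * (u ^ (-(a + b)) + v ^ (-(a + b))) := by
  have hu0 : 0 < u := one_pos.trans_le hu
  have hv0 : 0 < v := one_pos.trans_le hv
  calc u ^ (-(c + a)) * v ^ (-(c + b)) = (u * v) ^ (-c) * (u ^ (-a) * v ^ (-b)) := by
        rw [neg_add, neg_add, Real.rpow_add hu0, Real.rpow_add hv0,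
          Real.mul_rpow hu0.le hv0.le]
        ring
    _ ≤ k ^ c * J ^ (-c) * (u ^ (-(a + b)) + v ^ (-(a + b))) := by
        gcongr
        · exact rpow_neg_le_mul_rpow_neg_of_le_mul hJ (by positivity) hk hc hJuv
        · exact rpow_neg_mul_rpow_neg_le_add hu hv ha hb

section SeparatedSums

variable {E : Type*} [NormedAddCommGroup E]

theorem one_add_norm_rpow_neg_le_of_mem_ball {x γ z : E} {δ t : ℝ} (hδ : 0 ≤ δ) (ht : 0 ≤ t)
    (hz : z ∈ ball γ δ) :
    (1 + ‖x - γ‖) ^ (-t) ≤ (1 + δ) ^ t * (1 + ‖x - z‖) ^ (-t) := by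
  refine rpow_neg_le_mul_rpow_neg_of_le_mul (by positivity) (by positivity) (by positivity) ht ?_
  have := norm_sub_le_norm_sub_add_norm_sub x γ z
  rw [mem_ball, dist_eq_norm, ← norm_neg, neg_sub] at hz
  nlinarith [norm_nonneg (x - γ)]

variable [NormedSpace ℝ E] [FiniteDimensional ℝ E]

/-- Each term is dominated by an average of `z ↦ (1 + ‖x - z‖) ^ (-t)` over the ball around `γ`,
and these balls are disjoint, so every finite partial sum is dominated by the (finite) integral
of that function. -/
theorem exists_forall_tsum_one_add_norm_rpow_le {𝔇 : Set E} {δ t : ℝ} (hδ : 0 < δ)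
    (h𝔇 : 𝔇.PairwiseDisjoint (ball · δ)) (ht : (finrank ℝ E : ℝ) < t) :
    ∃ S, ∀ x : E, Summable (fun γ : 𝔇 => (1 + ‖x - γ‖) ^ (-t)) ∧
      ∑' γ : 𝔇, (1 + ‖x - γ‖) ^ (-t) ≤ S := by
  borelize E
  set μ : Measure E := Measure.addHaar
  have ht0 : 0 ≤ t := (Nat.cast_nonneg _).trans ht.le
  set V := μ.real (ball (0 : E) δ)
  have hV : 0 < V := ENNReal.toReal_pos (measure_ball_pos μ 0 hδ).ne' measure_ball_lt_top.ne
  set I := ∫ z, (1 + ‖z‖) ^ (-t) ∂μ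
  refine ⟨(1 + δ) ^ t * I / V, fun x => ?_⟩
  have hg : Integrable (fun z => (1 + ‖x - z‖) ^ (-t)) μ :=
    (integrable_one_add_norm ht).comp_sub_left x
  have hfinite : ∀ u : Finset 𝔇, ∑ γ ∈ u, (1 + ‖x - γ‖) ^ (-t) ≤ (1 + δ) ^ t * I / V := by
    intro u
    have hball : ∀ γ : 𝔇, V * (1 + ‖x - γ‖) ^ (-t) ≤
        ∫ z in ball (γ : E) δ, (1 + δ) ^ t * (1 + ‖x - z‖) ^ (-t) ∂μ := by
      intro γ
      have := setIntegral_ge_of_const_le (s := ball (γ : E) δ) measurableSet_ball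
        measure_ball_lt_top.ne
        (fun z hz => one_add_norm_rpow_neg_le_of_mem_ball (x := x) hδ.le ht0 hz)
        (hg.const_mul _).integrableOn
      rwa [Measure.real, Measure.addHaar_ball_center, smul_eq_mul] at this
    have hdisj : (u : Set 𝔇).PairwiseDisjoint (fun γ : 𝔇 => ball (γ : E) δ) :=
      fun γ₁ _ γ₂ _ hne => h𝔇 γ₁.2 γ₂.2 (Subtype.coe_injective.ne hne)
    have hunion : ∑ γ ∈ u, ∫ z in ball (γ : E) δ, (1 + ‖x - z‖) ^ (-t) ∂μ ≤ I := by
      rw [← integral_biUnion_finset u (fun _ _ => measurableSet_ball) hdisj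
        (fun _ _ => hg.integrableOn)]
      exact (setIntegral_le_integral hg (.of_forall fun z => by positivity)).trans_eq
        (integral_sub_left_eq_self (fun z => (1 + ‖z‖) ^ (-t)) μ x)
    rw [le_div_iff₀ hV, Finset.sum_mul]
    calc ∑ γ ∈ u, (1 + ‖x - γ‖) ^ (-t) * V
        ≤ ∑ γ ∈ u, (1 + δ) ^ t * ∫ z in ball (γ : E) δ, (1 + ‖x - z‖) ^ (-t) ∂μ := by
          refine Finset.sum_le_sum fun γ _ => ?_
          rw [mul_comm, ← integral_const_mul]
          exact hball γ
      _ ≤ (1 + δ) ^ t * I := by rw [← Finset.mul_sum]; gcongr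
  have hsum := summable_of_sum_le (fun γ => by positivity) hfinite
  exact ⟨hsum, hsum.tsum_le_of_sum_le hfinite⟩

end SeparatedSums

theorem summable_sigma_fin_comp_fst {ι : Type*} {n : ι → ℕ} {N : ℕ} (hn : ∀ i, n i ≤ N)
    {f : ι → ℝ} (hf : ∀ i, 0 ≤ f i) (hsum : Summable f) :
    Summable (fun σ : Σ i, Fin (n i) => f σ.1) := by
  refine (summable_sigma_of_nonneg fun σ => hf σ.1).2 ⟨fun _ => .of_finite, ?_⟩
  simp only [tsum_fintype, Finset.sum_const, Finset.card_univ, Fintype.card_fin, nsmul_eq_mul]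
  exact (hsum.mul_left (N : ℝ)).of_nonneg_of_le (fun i => mul_nonneg (Nat.cast_nonneg _) (hf i))
    fun i => mul_le_mul_of_nonneg_right (by exact_mod_cast hn i) (hf i)

theorem tsum_sigma_fin_comp_fst_le {ι : Type*} {n : ι → ℕ} {N : ℕ} (hn : ∀ i, n i ≤ N)
    {f : ι → ℝ} (hf : ∀ i, 0 ≤ f i) (hsum : Summable f) :
    ∑' σ : Σ i, Fin (n i), f σ.1 ≤ N * ∑' i, f i := by
  have hsigma := summable_sigma_fin_comp_fst hn hf hsum
  rw [hsigma.tsum_sigma' fun _ => .of_finite, ← tsum_mul_left]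
  refine Summable.tsum_le_tsum (fun i => ?_) ((summable_sigma_of_nonneg fun σ => hf σ.1).1 hsigma).2
    (hsum.mul_left (N : ℝ))
  simp only [tsum_fintype, Finset.sum_const, Finset.card_univ, Fintype.card_fin, nsmul_eq_mul]
  exact mul_le_mul_of_nonneg_right (by exact_mod_cast hn i) (hf i)

theorem UnifDiscrete.pairwiseDisjoint_ball {𝔇 : Set R2} {r : ℝ} (h𝔇 : UnifDiscrete 𝔇 r) :
    𝔇.PairwiseDisjoint (ball · (r / 2)) := by
  intro γ₁ hγ₁ γ₂ hγ₂ hne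
  refine ball_disjoint_ball (not_lt.1 fun hlt => hne (h𝔇.2 γ₁ ⟨hγ₁, mem_ball_self h𝔇.1⟩ ⟨hγ₂, ?_⟩))
  rw [mem_ball, dist_comm]
  linarith

theorem one_le_jap (x : R2) : 1 ≤ jap x :=
  Real.one_le_sqrt.2 (by simp)

theorem jap_pos (x : R2) : 0 < jap x :=
  one_pos.trans_le (one_le_jap x)

theorem norm_le_jap (x : R2) : ‖x‖ ≤ jap x :=
  Real.le_sqrt_of_sq_le (by linarith)

theorem jap_sub_le (a b : R2) : jap (a - b) ≤ √2 * (jap a * jap b) := by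
  rw [jap, jap, jap, ← Real.sqrt_mul (by positivity), ← Real.sqrt_mul zero_le_two]
  gcongr
  nlinarith [norm_sub_le a b, norm_nonneg (a - b), norm_nonneg a, norm_nonneg b,
    sq_nonneg (‖a‖ * ‖b‖), sq_nonneg (‖a‖ - ‖b‖)]

theorem UnifDiscrete.exists_forall_tsum_jap_rpow_le {𝔇 : Set R2} {r t : ℝ}
    (h𝔇 : UnifDiscrete 𝔇 r) (ht : 2 < t) :
    ∃ S, ∀ x : R2, Summable (fun γ : 𝔇 => jap (x - γ) ^ (-t)) ∧
      ∑' γ : 𝔇, jap (x - γ) ^ (-t) ≤ S := by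
  obtain ⟨S, hS⟩ := exists_forall_tsum_one_add_norm_rpow_le (half_pos h𝔇.1)
    h𝔇.pairwiseDisjoint_ball (t := t) (by simpa [finrank_euclideanSpace_fin] using ht)
  refine ⟨√2 ^ t * S, fun x => ?_⟩
  have hle : ∀ γ : 𝔇, jap (x - γ) ^ (-t) ≤ √2 ^ t * (1 + ‖x - γ‖) ^ (-t) := fun γ =>
    rpow_neg_le_mul_rpow_neg_of_le_mul (by positivity) (jap_pos _).le (by positivity)
      (by linarith) (one_add_norm_le_sqrt_two_mul_sqrt _)
  have hsum := ((hS x).1.mul_left _).of_nonneg_of_le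
    (fun γ => Real.rpow_nonneg (jap_pos _).le _) hle
  refine ⟨hsum, (hsum.tsum_le_tsum hle ((hS x).1.mul_left _)).trans ?_⟩
  rw [tsum_mul_left]
  gcongr
  exact (hS x).2

theorem norm_coord_mul_mul_conj_le {γ x y : R2} {i : Fin 2} {s K ε : ℝ} (hε : 0 < ε)
    (hεs : ε < s - 3 / 2) {a b : ℂ} (ha : ‖a‖ ≤ K * jap (x - γ) ^ (-s))
    (hb : ‖b‖ ≤ K * jap (y - γ) ^ (-s)) :
    ‖((γ i : ℝ) : ℂ) * a * starRingEnd ℂ b‖ ≤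
      K ^ 2 * (√2 ^ (s - 3 / 2 - ε) * jap (x - y) ^ (-(s - 3 / 2 - ε)) +
          √2 ^ (s - 1 - ε) * |x i| * jap (x - y) ^ (-(s - 1 - ε))) *
        (jap (x - γ) ^ (-(2 + 2 * ε)) + jap (y - γ) ^ (-(2 + 2 * ε))) := by
  set u := jap (x - γ)
  set v := jap (y - γ)
  set J := jap (x - y)
  have hu : 1 ≤ u := one_le_jap _
  have hv : 1 ≤ v := one_le_jap _
  have hJ : 0 < J := jap_pos _
  have hJuv : J ≤ √2 * (u * v) := by
    simpa only [sub_sub_sub_cancel_right] using jap_sub_le (x - γ) (y - γ)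
  have hcoord : |γ i| ≤ |x i| + u :=
    calc |γ i| = |x i - (x - γ) i| := by simp
      _ ≤ |x i| + |(x - γ) i| := abs_sub _ _
      _ ≤ |x i| + u := by
          gcongr
          exact (PiLp.norm_apply_le (x - γ) i).trans (norm_le_jap _)
  have hdecay : u ^ (-s) * v ^ (-s) ≤
      √2 ^ (s - 1 - ε) * J ^ (-(s - 1 - ε)) * (u ^ (-(2 + 2 * ε)) + v ^ (-(2 + 2 * ε))) := by
    have h := rpow_neg_add_mul_rpow_neg_add_le (a := 1 + ε) (b := 1 + ε) (c := s - 1 - ε) hu hv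
      hJ (by positivity) hJuv (by positivity) (by positivity) (by linarith)
    rwa [show s - 1 - ε + (1 + ε) = s by ring, show 1 + ε + (1 + ε) = 2 + 2 * ε by ring] at h
  have hdecay' : u ^ (-(s - 1)) * v ^ (-s) ≤
      √2 ^ (s - 3 / 2 - ε) * J ^ (-(s - 3 / 2 - ε)) *
        (u ^ (-(2 + 2 * ε)) + v ^ (-(2 + 2 * ε))) := by
    have h := rpow_neg_add_mul_rpow_neg_add_le (a := 1 / 2 + ε) (b := 3 / 2 + ε)
      (c := s - 3 / 2 - ε) hu hv hJ (by positivity) hJuv (by positivity) (by positivity)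
      (by linarith)
    rwa [show s - 3 / 2 - ε + (1 / 2 + ε) = s - 1 by ring,
      show s - 3 / 2 - ε + (3 / 2 + ε) = s by ring,
      show 1 / 2 + ε + (3 / 2 + ε) = 2 + 2 * ε by ring] at h
  have hu_mul : u * u ^ (-s) = u ^ (-(s - 1)) := by
    rw [show -(s - 1) = 1 + -s by ring, Real.rpow_add (one_pos.trans_le hu), Real.rpow_one]
  calc ‖((γ i : ℝ) : ℂ) * a * starRingEnd ℂ b‖ = |γ i| * (‖a‖ * ‖b‖) := by
        rw [norm_mul, norm_mul, Complex.norm_conj, Complex.norm_real, Real.norm_eq_abs, mul_assoc]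
    _ ≤ (|x i| + u) * ((K * u ^ (-s)) * (K * v ^ (-s))) := by
        have := (norm_nonneg a).trans ha
        gcongr
    _ = K ^ 2 * (|x i| * (u ^ (-s) * v ^ (-s)) + u ^ (-(s - 1)) * v ^ (-s)) := by
        rw [← hu_mul]; ring
    _ ≤ K ^ 2 * (|x i| * (√2 ^ (s - 1 - ε) * J ^ (-(s - 1 - ε)) *
          (u ^ (-(2 + 2 * ε)) + v ^ (-(2 + 2 * ε)))) +
          √2 ^ (s - 3 / 2 - ε) * J ^ (-(s - 3 / 2 - ε)) *
            (u ^ (-(2 + 2 * ε)) + v ^ (-(2 + 2 * ε)))) := by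
        gcongr
    _ = _ := by ring

theorem UnifDiscrete.exists_forall_summable_and_norm_tsum_le {𝔇 : Set R2} {r : ℝ}
    (h𝔇 : UnifDiscrete 𝔇 r) {m : R2 → ℕ} {mStar : ℕ} (hm : ∀ γ ∈ 𝔇, m γ ≤ mStar)
    {φ : (γ : R2) → Fin (m γ) → R2 → ℂ} {s K : ℝ}
    (hφ : ∀ γ ∈ 𝔇, ∀ a, ∀ x : R2, ‖φ γ a x‖ ≤ K * jap (x - γ) ^ (-s)) (i : Fin 2) {ε : ℝ}
    (hε : 0 < ε) (hεs : ε < s - 3 / 2) :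
    ∃ A B : ℝ, 0 ≤ A ∧ 0 ≤ B ∧ ∀ x y : R2,
      Summable (fun σ : WIdx 𝔇 m =>
        ‖(((σ.1 : R2) i : ℝ) : ℂ) * φ σ.1 σ.2 x * (starRingEnd ℂ) (φ σ.1 σ.2 y)‖) ∧
      ‖∑' σ : WIdx 𝔇 m, (((σ.1 : R2) i : ℝ) : ℂ) * φ σ.1 σ.2 x * (starRingEnd ℂ) (φ σ.1 σ.2 y)‖
        ≤ A * jap (x - y) ^ (-(s - 3 / 2 - ε)) + B * |x i| * jap (x - y) ^ (-(s - 1 - ε)) := by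
  obtain ⟨S, hS⟩ := h𝔇.exists_forall_tsum_jap_rpow_le (t := 2 + 2 * ε) (by linarith)
  have hS0 : 0 ≤ S := (tsum_nonneg fun γ => Real.rpow_nonneg (jap_pos _).le _).trans (hS 0).2
  have hm' : ∀ γ : 𝔇, m γ ≤ mStar := fun γ => hm γ γ.2
  refine ⟨K ^ 2 * √2 ^ (s - 3 / 2 - ε) * (mStar * (2 * S)),
    K ^ 2 * √2 ^ (s - 1 - ε) * (mStar * (2 * S)), by positivity, by positivity, fun x y => ?_⟩
  set g : 𝔇 → ℝ := fun γ => jap (x - γ) ^ (-(2 + 2 * ε)) + jap (y - γ) ^ (-(2 + 2 * ε))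
  have hg0 : ∀ γ, 0 ≤ g γ := fun γ => by
    have := jap_pos (x - γ)
    have := jap_pos (y - γ)
    positivity
  have hg : Summable g := (hS x).1.add (hS y).1
  have hgS : ∑' γ, g γ ≤ 2 * S := by
    rw [(hS x).1.tsum_add (hS y).1]
    linarith [(hS x).2, (hS y).2]
  set D := K ^ 2 * (√2 ^ (s - 3 / 2 - ε) * jap (x - y) ^ (-(s - 3 / 2 - ε)) +
    √2 ^ (s - 1 - ε) * |x i| * jap (x - y) ^ (-(s - 1 - ε)))
  have hD : 0 ≤ D := by have := jap_pos (x - y); positivity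
  have hterm : ∀ σ : WIdx 𝔇 m,
      ‖(((σ.1 : R2) i : ℝ) : ℂ) * φ σ.1 σ.2 x * (starRingEnd ℂ) (φ σ.1 σ.2 y)‖ ≤ D * g σ.1 :=
    fun σ => norm_coord_mul_mul_conj_le hε hεs (hφ _ σ.1.2 _ _) (hφ _ σ.1.2 _ _)
  have hDg : Summable (fun σ : WIdx 𝔇 m => D * g σ.1) :=
    (summable_sigma_fin_comp_fst hm' hg0 hg).mul_left D
  have hsum := hDg.of_nonneg_of_le (fun _ => norm_nonneg _) hterm
  refine ⟨hsum, ?_⟩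
  calc _ ≤ ∑' σ : WIdx 𝔇 m, D * g σ.1 :=
        (norm_tsum_le_tsum_norm hsum).trans (hsum.tsum_le_tsum hterm hDg)
    _ ≤ D * (mStar * (2 * S)) := by
        rw [tsum_mul_left]
        gcongr
        exact (tsum_sigma_fin_comp_fst_le hm' hg0 hg).trans (by gcongr)
    _ = _ := by ring

theorem statement_8_general
    (P : H2 →L[ℂ] H2)
    (𝔇 : Set R2) (r : ℝ) (h𝔇 : UnifDiscrete 𝔇 r)
    (s : ℝ) (hs : 3 / 2 < s)
    (m : R2 → ℕ) (mStar : ℕ) (w : (γ : R2) → Fin (m γ) → H2) (M : ℝ)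
    (hGWB : IsGWB P 𝔇 m mStar w (fun t => (1 + t ^ 2) ^ s) M)
    -- pointwise bound on the continuous representatives of the GWFs:
    (K : ℝ)
    (hptw : ∀ γ ∈ 𝔇, ∀ a, ∀ x : R2,
      ‖(w γ a : R2 → ℂ) x‖ ≤ K * jap (x - γ) ^ (-s)) :
    ∀ i : Fin 2,
    (∀ x y : R2, Summable (fun σ : WIdx 𝔇 m =>
      ‖((((σ.1 : R2) i : ℝ) : ℂ) * (w (σ.1 : R2) σ.2 : R2 → ℂ) x *
        (starRingEnd ℂ) ((w (σ.1 : R2) σ.2 : R2 → ℂ) y))‖)) ∧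
    ∀ ε : ℝ, 0 < ε → ε < s - 3 / 2 →
      ∃ C₀ C₀' : ℝ, 0 < C₀ ∧ 0 < C₀' ∧
        ∀ x y : R2,
          ‖(∑' σ : WIdx 𝔇 m,
              (((σ.1 : R2) i : ℝ) : ℂ) * (w (σ.1 : R2) σ.2 : R2 → ℂ) x *
                (starRingEnd ℂ) ((w (σ.1 : R2) σ.2 : R2 → ℂ) y))‖
            ≤ C₀ * jap (x - y) ^ (-(s - 3 / 2 - ε)) +
              C₀' * |x i| * jap (x - y) ^ (-(s - 1 - ε)) := by
  intro i
  have hbound := fun ε (hε : 0 < ε) (hεs : ε < s - 3 / 2) =>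
    h𝔇.exists_forall_summable_and_norm_tsum_le hGWB.1 (φ := fun γ a => (w γ a : R2 → ℂ)) hptw i
      hε hεs
  refine ⟨fun x y => ?_, fun ε hε hεs => ?_⟩
  · obtain ⟨_, _, -, -, h⟩ := hbound ((s - 3 / 2) / 2) (by linarith) (by linarith)
    exact (h x y).1
  · obtain ⟨A, B, hA, hB, h⟩ := hbound ε hε hεs
    refine ⟨A + 1, B + 1, by positivity, by positivity, fun x y => (h x y).2.trans ?_⟩
    have := jap_pos (x - y)
    gcongr <;> linarith

/-- kernel estimate for the operators `Γ_i`, polynomial case. For a GWB of an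
exponentially localized projection, `G`-localized around an `r`-uniformly discrete set with
`G(‖x‖) = ⟨x⟩^{2s}`, `s > 3/2`, the series defining the kernel of `Γ_i` converges absolutely and
satisfies `|Γ_i(x,y)| ≤ C₀ ⟨x-y⟩^{-(s-3/2-ε)} + C₀' |x_i| ⟨x-y⟩^{-(s-1-ε)}` for every
`0 < ε < s - 3/2`. -/
theorem statement_8
    (P : H2 →L[ℂ] H2) (hP : IsOrthProj P)
    (p : R2 → R2 → ℂ) (C β : ℝ) (hp : IsExpLocKernel p C β) (hker : HasKernel P p)
    (𝔇 : Set R2) (r : ℝ) (h𝔇 : UnifDiscrete 𝔇 r)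
    (s : ℝ) (hs : 3 / 2 < s)
    (m : R2 → ℕ) (mStar : ℕ) (w : (γ : R2) → Fin (m γ) → H2) (M : ℝ)
    (hGWB : IsGWB P 𝔇 m mStar w (fun t => (1 + t ^ 2) ^ s) M)
    -- pointwise bound on the continuous representatives of the GWFs:
    (K : ℝ) (hK : 0 < K)
    (hptw : ∀ γ ∈ 𝔇, ∀ a, ∀ x : R2,
      ‖(w γ a : R2 → ℂ) x‖ ≤ K * jap (x - γ) ^ (-s)) :
    ∀ i : Fin 2,
    (∀ x y : R2, Summable (fun σ : WIdx 𝔇 m =>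
      ‖((((σ.1 : R2) i : ℝ) : ℂ) * (w (σ.1 : R2) σ.2 : R2 → ℂ) x *
        (starRingEnd ℂ) ((w (σ.1 : R2) σ.2 : R2 → ℂ) y))‖)) ∧
    ∀ ε : ℝ, 0 < ε → ε < s - 3 / 2 →
      ∃ C₀ C₀' : ℝ, 0 < C₀ ∧ 0 < C₀' ∧
        ∀ x y : R2,
          ‖(∑' σ : WIdx 𝔇 m,
              (((σ.1 : R2) i : ℝ) : ℂ) * (w (σ.1 : R2) σ.2 : R2 → ℂ) x *
                (starRingEnd ℂ) ((w (σ.1 : R2) σ.2 : R2 → ℂ) y))‖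
            ≤ C₀ * jap (x - y) ^ (-(s - 3 / 2 - ε)) +
              C₀' * |x i| * jap (x - y) ^ (-(s - 1 - ε)) :=
  statement_8_general P 𝔇 r h𝔇 s hs m mStar w M hGWB K hptw

end
end

section
/- Let P be an exponentially localized orthogonal projection on L²(ℝ²) admitting a generalized Wannier basis {w_{γ,a}}_{γ∈𝔇, 1≤a≤m(γ)} which is s-localized around an r-uniformly discrete set 𝔇 ⊂ ℝ² for some s > 5. Then there exists a constant I_MI > 0 such that for every L ≥ 1: ∑_{ξ ∈ 𝔇 \ Λ_L} ∑_{1≤c≤m(ξ)} ‖χ_{Λ_L} w_{ξ,c}‖_{L²(ℝ²)} ≤ I_MI · L, where Λ_L = [−L,L]² and χ_{Λ_L} is the characteristic function of Λ_L. -/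
open MeasureTheory Filter Topology

noncomputable section

/-!
The localization bound controls the mass of `w_{γ,a}` in `Λ_L` by
`⟨dist(γ, Λ_L)⟩^{-s} ≲ (1 + (‖γ‖_∞ - L))^{-3}`. Uniform discreteness makes the map sending `γ`
to the cell of side `h ≤ r/2` of the lattice `hℤ²` containing it injective, so the sum over
centres is dominated by a sum over lattice points. The `8k` points of the square shell `k` lie at
distance about `kh - L` beyond `Λ_L`; writing `k = ⌊L/h⌋ + n`, shell `k` contributes
`O(L (n+1)^{-2})`, which sums to `O(L)`.
-/

open scoped ENNReal Finset

lemma setIntegral_norm_sq_le_of_lintegral_weight_le {α : Type*} [MeasurableSpace α]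
    {μ : Measure α} {f : α → ℂ} (hf : AEStronglyMeasurable f μ) {S : Set α}
    (hS : MeasurableSet S) {g : α → ℝ} {c M : ℝ} (hc : 0 < c) (hM : 0 ≤ M)
    (hcg : ∀ x ∈ S, c ≤ g x)
    (hfg : ∫⁻ x, (‖f x‖₊ : ℝ≥0∞) ^ 2 * ENNReal.ofReal (g x) ∂μ ≤ ENNReal.ofReal M) :
    ∫ x in S, ‖f x‖ ^ 2 ∂μ ≤ M / c := by
  have hlin : (∫⁻ x in S, ‖f x‖ₑ ^ 2 ∂μ) * ENNReal.ofReal c ≤ ENNReal.ofReal M :=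
    calc (∫⁻ x in S, ‖f x‖ₑ ^ 2 ∂μ) * ENNReal.ofReal c
        = ∫⁻ x in S, ‖f x‖ₑ ^ 2 * ENNReal.ofReal c ∂μ :=
          (lintegral_mul_const' _ _ ENNReal.ofReal_ne_top).symm
      _ ≤ ∫⁻ x in S, ‖f x‖ₑ ^ 2 * ENNReal.ofReal (g x) ∂μ :=
          setLIntegral_mono' hS fun x hx => by gcongr; exact hcg x hx
      _ ≤ ∫⁻ x, ‖f x‖ₑ ^ 2 * ENNReal.ofReal (g x) ∂μ := setLIntegral_le_lintegral _ _
      _ ≤ ENNReal.ofReal M := hfg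
  have hlin' : ∫⁻ x in S, ‖f x‖ₑ ^ 2 ∂μ ≤ ENNReal.ofReal (M / c) := by
    rw [ENNReal.ofReal_div_of_pos hc]
    exact ENNReal.le_div_iff_mul_le (by simp [hc]) (by simp) |>.mpr hlin
  rw [integral_eq_lintegral_of_nonneg_ae (f := fun x => ‖f x‖ ^ 2)
    (ae_of_all _ fun x => by positivity) (hf.norm.pow 2).restrict]
  refine ENNReal.toReal_le_of_le_ofReal (div_nonneg hM hc.le) (le_trans (le_of_eq ?_) hlin')
  refine lintegral_congr fun x => ?_
  rw [ENNReal.ofReal_pow (norm_nonneg _), ofReal_norm]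

def supNorm (x : R2) : ℝ := max |x 0| |x 1|

lemma mem_Lam_iff {L : ℝ} {x : R2} : x ∈ Lam L ↔ supNorm x ≤ L := max_le_iff.symm

lemma lt_supNorm_of_notMem_Lam {L : ℝ} {x : R2} (hx : x ∉ Lam L) : L < supNorm x :=
  lt_of_not_ge (mem_Lam_iff.not.mp hx)

lemma supNorm_sub_le_norm_sub_of_mem_Lam {L : ℝ} {x : R2} (hx : x ∈ Lam L) (γ : R2) :
    supNorm γ - L ≤ ‖x - γ‖ := by
  have hcoord : ∀ i, |x i| ≤ L → |γ i| - L ≤ ‖x - γ‖ := fun i hi =>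
    calc |γ i| - L ≤ |γ i| - |x i| := by linarith
      _ ≤ |x i - γ i| := by rw [abs_sub_comm]; exact abs_sub_abs_le_abs_sub _ _
      _ ≤ ‖x - γ‖ := PiLp.norm_apply_le (x - γ) i
  rcases max_choice |γ 0| |γ 1| with h | h <;> rw [supNorm, h]
  exacts [hcoord 0 hx.1, hcoord 1 hx.2]

lemma measurableSet_Lam (L : ℝ) : MeasurableSet (Lam L) := by
  simp only [Lam, Set.ofPred_and]
  exact (measurableSet_le (by fun_prop) measurable_const).inter
    (measurableSet_le (by fun_prop) measurable_const)

lemma one_add_div_two_pow_six_le_rpow {D s : ℝ} (hD : 0 ≤ D) (hs : 3 ≤ s) :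
    ((1 + D) / 2) ^ 6 ≤ (1 + D ^ 2) ^ s :=
  calc ((1 + D) / 2) ^ 6 = (((1 + D) / 2) ^ 2) ^ 3 := by ring
    _ ≤ (1 + D ^ 2) ^ 3 := by gcongr; nlinarith
    _ = (1 + D ^ 2) ^ (3 : ℝ) := by norm_cast
    _ ≤ (1 + D ^ 2) ^ s := Real.rpow_le_rpow_of_exponent_le (by nlinarith) hs

lemma sqrt_setIntegral_Lam_le_of_localized {f : H2} {γ : R2} {s M L : ℝ} (hs : 3 ≤ s)
    (hM : 0 ≤ M) (hγ : γ ∉ Lam L)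
    (hloc : ∫⁻ x, (‖(f : R2 → ℂ) x‖₊ : ℝ≥0∞) ^ 2 * ENNReal.ofReal ((1 + ‖x - γ‖ ^ 2) ^ s)
      ≤ ENNReal.ofReal M) :
    √(∫ x in Lam L, ‖(f : R2 → ℂ) x‖ ^ 2) ≤ 8 * √M * (1 + (supNorm γ - L))⁻¹ ^ 3 := by
  set D := supNorm γ - L
  have hD : 0 < D := sub_pos.mpr (lt_supNorm_of_notMem_Lam hγ)
  have hweight : ∀ x ∈ Lam L, (1 + D ^ 2) ^ s ≤ (1 + ‖x - γ‖ ^ 2) ^ s := fun x hx => by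
    have := supNorm_sub_le_norm_sub_of_mem_Lam hx γ
    gcongr
  have hint := setIntegral_norm_sq_le_of_lintegral_weight_le (Lp.aestronglyMeasurable f)
    (measurableSet_Lam L) (by positivity) hM hweight hloc
  calc √(∫ x in Lam L, ‖(f : R2 → ℂ) x‖ ^ 2)
      ≤ √(M * (8 * (1 + D)⁻¹ ^ 3) ^ 2) := by
        gcongr
        calc _ ≤ M / (1 + D ^ 2) ^ s := hint
          _ ≤ M / ((1 + D) / 2) ^ 6 :=
            div_le_div_of_nonneg_left hM (by positivity)
              (one_add_div_two_pow_six_le_rpow hD.le hs)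
          _ = M * (8 * (1 + D)⁻¹ ^ 3) ^ 2 := by field_simp; ring
    _ = 8 * √M * (1 + D)⁻¹ ^ 3 := by
        rw [Real.sqrt_mul hM, Real.sqrt_sq (by positivity)]; ring

def cellIndex (h : ℝ) (x : R2) : ℤ × ℤ := (⌊x 0 / h⌋, ⌊x 1 / h⌋)

/-- `q ∈ Finset.box (shell q)`, see `Int.mem_box`. -/
def shell (q : ℤ × ℤ) : ℕ := max q.1.natAbs q.2.natAbs

lemma injOn_cellIndex {𝔇 : Set R2} {r h : ℝ} (h𝔇 : UnifDiscrete 𝔇 r) (hh : 0 < h)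
    (hhr : 2 * h ≤ r) : Set.InjOn (cellIndex h) 𝔇 := by
  intro γ hγ δ hδ hγδ
  have hcoord : ∀ i : Fin 2, ⌊γ i / h⌋ = ⌊δ i / h⌋ → (γ i - δ i) ^ 2 < h ^ 2 := by
    intro i hi
    have := Int.sub_floor_div_mul_nonneg (γ i) hh
    have := Int.sub_floor_div_mul_lt (γ i) hh
    have := Int.sub_floor_div_mul_nonneg (δ i) hh
    have := Int.sub_floor_div_mul_lt (δ i) hh
    rw [hi] at *
    exact sq_lt_sq' (by linarith) (by linarith)
  have hdist : dist δ γ < r := by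
    have h0 := hcoord 0 (congrArg Prod.fst hγδ)
    have h1 := hcoord 1 (congrArg Prod.snd hγδ)
    rw [EuclideanSpace.dist_eq, Fin.sum_univ_two, Real.sqrt_lt' (by linarith)]
    simp only [Real.dist_eq, sq_abs]
    nlinarith
  exact h𝔇.2 γ ⟨hγ, Metric.mem_ball_self (by linarith)⟩ ⟨hδ, hdist⟩

lemma abs_abs_sub_natAbs_floor_div_mul_lt {h : ℝ} (hh : 0 < h) (t : ℝ) :
    |(|t| - ⌊t / h⌋.natAbs * h)| < h := by
  have hnat : (⌊t / h⌋.natAbs : ℝ) * h = |⌊t / h⌋ * h| := by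
    rw [Nat.cast_natAbs, Int.cast_abs, abs_mul, abs_of_pos hh]
  rw [hnat]
  refine (abs_abs_sub_abs_le_abs_sub _ _).trans_lt (abs_lt.mpr ⟨?_, ?_⟩)
  · linarith [Int.sub_floor_div_mul_nonneg t hh]
  · exact Int.sub_floor_div_mul_lt t hh

lemma abs_supNorm_sub_shell_cellIndex_mul_lt {h : ℝ} (hh : 0 < h) (x : R2) :
    |supNorm x - shell (cellIndex h x) * h| < h := by
  rw [shell, Nat.cast_max, max_mul_of_nonneg _ _ hh.le, supNorm]
  exact (abs_max_sub_max_le_max _ _ _ _).trans_lt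
    (max_lt (abs_abs_sub_natAbs_floor_div_mul_lt hh _)
      (abs_abs_sub_natAbs_floor_div_mul_lt hh _))

lemma card_box_le (k : ℕ) : #(Finset.box k : Finset (ℤ × ℤ)) ≤ 8 * k + 1 := by
  rcases Nat.eq_zero_or_pos k with rfl | hk
  · simp
  · rw [Int.card_box hk.ne']; omega

lemma sum_comp_shell_le (Q : Finset (ℤ × ℤ)) {g : ℕ → ℝ} (hg : ∀ k, 0 ≤ g k) :
    ∑ q ∈ Q, g (shell q) ≤ ∑ k ∈ Q.image shell, (8 * k + 1) * g k := by
  rw [Finset.sum_comp]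
  refine Finset.sum_le_sum fun k _ => ?_
  rw [nsmul_eq_mul]
  gcongr
  · exact hg k
  have hfiber : {q ∈ Q | shell q = k} ⊆ Finset.box k := fun q hq => by
    rw [Int.mem_box]; exact (Finset.mem_filter.mp hq).2
  exact_mod_cast (Finset.card_le_card hfiber).trans (card_box_le k)

lemma summable_inv_nat_add_one_sq : Summable fun n : ℕ => ((n : ℝ) + 1)⁻¹ ^ 2 := by
  simpa [inv_pow] using
    (summable_nat_add_iff 1).mpr (Real.summable_nat_pow_inv.mpr one_lt_two)

lemma exists_sum_shell_weight_le {h : ℝ} (hh : 0 < h) (hh1 : h ≤ 1) :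
    ∃ A : ℝ, ∀ L : ℝ, 1 ≤ L → ∀ J : Finset ℕ, (∀ k ∈ J, L < (k + 1) * h) →
      ∑ k ∈ J, (8 * k + 1) * (1 + max 0 ((k - 1) * h - L))⁻¹ ^ 3 ≤ A * L := by
  set Z := ∑' n : ℕ, ((n : ℝ) + 1)⁻¹ ^ 2
  refine ⟨486 / h ^ 4 * Z, fun L hL J hJ => ?_⟩
  set k₀ := ⌊L / h⌋₊
  have hk₀ : (k₀ : ℝ) ≤ L / h := Nat.floor_le (by positivity)
  have hk₀' : L / h < k₀ + 1 := Nat.lt_floor_add_one _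
  rw [le_div_iff₀ hh] at hk₀
  rw [div_lt_iff₀ hh] at hk₀'
  have hk₀J : ∀ k ∈ J, k₀ ≤ k := fun k hk => by
    have : (k₀ : ℝ) < k + 1 := by nlinarith [hJ k hk]
    exact_mod_cast Nat.lt_succ_iff.mp (by exact_mod_cast this)
  have hterm : ∀ k ∈ J, (8 * k + 1) * (1 + max 0 ((k - 1) * h - L))⁻¹ ^ 3
      ≤ 486 / h ^ 4 * L * (((k - k₀ : ℕ) : ℝ) + 1)⁻¹ ^ 2 := by
    intro k hk
    set n : ℕ := k - k₀
    have hkn : (k : ℝ) = k₀ + n := by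
      rw [Nat.cast_sub (hk₀J k hk)]; ring
    have hcount : (8 * k + 1 : ℝ) ≤ 18 * L / h * (n + 1) := by
      rw [hkn, div_mul_eq_mul_div, le_div_iff₀ hh]
      nlinarith
    have hdist : (n + 1) * h / 3 ≤ 1 + max 0 ((k - 1) * h - L) := by
      have hmax : (k - 1) * h - L ≤ max 0 ((k - 1) * h - L) := le_max_right _ _
      rcases Nat.lt_or_ge n 2 with hn | hn
      · have : (n : ℝ) ≤ 1 := by exact_mod_cast Nat.lt_succ_iff.mp hn
        nlinarith [le_max_left 0 ((k - 1) * h - L)]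
      · have : (2 : ℝ) ≤ n := by exact_mod_cast hn
        rw [hkn] at hmax ⊢
        nlinarith [mul_le_mul_of_nonneg_right this hh.le]
    calc (8 * k + 1) * (1 + max 0 ((k - 1) * h - L))⁻¹ ^ 3
        ≤ 18 * L / h * (n + 1) * ((n + 1) * h / 3)⁻¹ ^ 3 := by
          gcongr
      _ = 486 / h ^ 4 * L * ((n : ℝ) + 1)⁻¹ ^ 2 := by
          field_simp
          ring
  have hinj : Set.InjOn (fun k => k - k₀) J := fun a ha b hb hab => by
    have := hk₀J a ha; have := hk₀J b hb; simp only at hab; omega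
  calc ∑ k ∈ J, (8 * k + 1) * (1 + max 0 ((k - 1) * h - L))⁻¹ ^ 3
      ≤ ∑ k ∈ J, 486 / h ^ 4 * L * (((k - k₀ : ℕ) : ℝ) + 1)⁻¹ ^ 2 := Finset.sum_le_sum hterm
    _ = 486 / h ^ 4 * L * ∑ n ∈ J.image (fun k => k - k₀), ((n : ℝ) + 1)⁻¹ ^ 2 := by
      rw [← Finset.mul_sum, Finset.sum_image hinj]
    _ ≤ 486 / h ^ 4 * L * Z := by
      gcongr
      exact summable_inv_nat_add_one_sq.sum_le_tsum _ fun n _ => by positivity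
    _ = 486 / h ^ 4 * Z * L := by ring

lemma exists_sum_supNorm_weight_le {𝔇 : Set R2} {r : ℝ} (h𝔇 : UnifDiscrete 𝔇 r) :
    ∃ A : ℝ, ∀ L : ℝ, 1 ≤ L → ∀ Ξ : Finset R2, ↑Ξ ⊆ 𝔇 → (∀ γ ∈ Ξ, γ ∉ Lam L) →
      ∑ γ ∈ Ξ, (1 + (supNorm γ - L))⁻¹ ^ 3 ≤ A * L := by
  classical
  set h := min r 1 / 2
  have hh : 0 < h := by have := h𝔇.1; positivity
  obtain ⟨A, hA⟩ :=
    exists_sum_shell_weight_le hh (by simp only [h]; linarith [min_le_right r 1])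
  refine ⟨A, fun L hL Ξ hΞ hout => ?_⟩
  set ψ : ℕ → ℝ := fun k => (1 + max 0 ((k - 1) * h - L))⁻¹ ^ 3
  have hcell : ∀ γ ∈ Ξ, L < supNorm γ ∧ supNorm γ < (shell (cellIndex h γ) + 1) * h ∧
      (shell (cellIndex h γ) - 1) * h < supNorm γ := fun γ hγ => by
    have := abs_lt.mp (abs_supNorm_sub_shell_cellIndex_mul_lt hh γ)
    exact ⟨lt_supNorm_of_notMem_Lam (hout γ hγ), by linarith, by linarith⟩
  have hweight : ∀ γ ∈ Ξ, (1 + (supNorm γ - L))⁻¹ ^ 3 ≤ ψ (shell (cellIndex h γ)) :=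
    fun γ hγ => by
      obtain ⟨hL, -, hlow⟩ := hcell γ hγ
      have : 1 + max 0 ((shell (cellIndex h γ) - 1) * h - L) ≤ 1 + (supNorm γ - L) := by
        gcongr; exact max_le (by linarith) (by linarith)
      simp only [ψ]
      gcongr
  have hJ : ∀ k ∈ (Ξ.image (cellIndex h)).image shell, L < (k + 1) * h := fun k hk => by
    obtain ⟨q, hq, rfl⟩ := Finset.mem_image.mp hk
    obtain ⟨γ, hγ, rfl⟩ := Finset.mem_image.mp hq
    exact (hcell γ hγ).1.trans (hcell γ hγ).2.1
  have hinj : Set.InjOn (cellIndex h) Ξ :=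
    (injOn_cellIndex h𝔇 hh (by simp only [h]; linarith [min_le_left r 1])).mono hΞ
  calc ∑ γ ∈ Ξ, (1 + (supNorm γ - L))⁻¹ ^ 3
      ≤ ∑ γ ∈ Ξ, ψ (shell (cellIndex h γ)) := Finset.sum_le_sum hweight
    _ = ∑ q ∈ Ξ.image (cellIndex h), ψ (shell q) :=
      (Finset.sum_image (f := fun q => ψ (shell q)) hinj).symm
    _ ≤ ∑ k ∈ (Ξ.image (cellIndex h)).image shell, (8 * k + 1) * ψ k :=
      sum_comp_shell_le _ fun k => by positivity
    _ ≤ A * L := hA L hL _ hJ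

lemma sum_comp_sigma_fst_le {𝔇 : Set R2} {m : R2 → ℕ} {mStar : ℕ}
    (hm : ∀ γ ∈ 𝔇, m γ ≤ mStar) (F : Finset (WIdx 𝔇 m)) {g : R2 → ℝ}
    (hg : ∀ σ ∈ F, 0 ≤ g σ.1) :
    ∑ σ ∈ F, g σ.1 ≤ mStar * ∑ γ ∈ F.image (fun σ => (σ.1 : R2)), g γ := by
  classical
  rw [Finset.sum_comp (s := F) g (fun σ => (σ.1 : R2)), Finset.mul_sum]
  refine Finset.sum_le_sum fun γ hγ => ?_
  obtain ⟨σ, hσ, rfl⟩ := Finset.mem_image.mp hγ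
  rw [nsmul_eq_mul]
  gcongr
  · exact hg σ hσ
  have hfiber :
      {τ ∈ F | (τ.1 : R2) = σ.1} ⊆ Finset.univ.map (Function.Embedding.sigmaMk σ.1) := by
    rintro ⟨τ, a⟩ hτ
    obtain rfl : τ = σ.1 := Subtype.ext (Finset.mem_filter.mp hτ).2
    simp
  calc #{τ ∈ F | (τ.1 : R2) = σ.1} ≤ m σ.1 := (Finset.card_le_card hfiber).trans (by simp)
    _ ≤ mStar := hm _ σ.1.2

theorem statement_11_general
    (P : H2 →L[ℂ] H2)
    (𝔇 : Set R2) (r : ℝ) (h𝔇 : UnifDiscrete 𝔇 r)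
    (s : ℝ) (hs : 5 < s)
    (m : R2 → ℕ) (mStar : ℕ) (w : (γ : R2) → Fin (m γ) → H2) (M : ℝ)
    (hGWB : IsGWB P 𝔇 m mStar w (fun t => (1 + t ^ 2) ^ s) M) :
    ∃ IMI : ℝ, 0 < IMI ∧ ∀ L : ℝ, 1 ≤ L →
      ∀ F : Finset (WIdx 𝔇 m), (∀ σ ∈ F, (σ.1 : R2) ∉ Lam L) →
        ∑ σ ∈ F, Real.sqrt (∫ x in Lam L, ‖(w (σ.1 : R2) σ.2 : R2 → ℂ) x‖ ^ 2)
          ≤ IMI * L := by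
  obtain ⟨hm, -, -, -, hloc⟩ := hGWB
  obtain ⟨A, hA⟩ := exists_sum_supNorm_weight_le h𝔇
  set c := 8 * √(max M 0)
  refine ⟨max 1 (c * mStar * A), one_pos.trans_le (le_max_left _ _), fun L hL F hF => ?_⟩
  set Ξ := F.image fun σ => (σ.1 : R2)
  have hΞ : ↑Ξ ⊆ 𝔇 := by
    intro γ hγ
    obtain ⟨σ, -, rfl⟩ := Finset.mem_image.mp hγ
    exact σ.1.2
  have hout : ∀ γ ∈ Ξ, γ ∉ Lam L := by
    intro γ hγ
    obtain ⟨σ, hσ, rfl⟩ := Finset.mem_image.mp hγ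
    exact hF σ hσ
  have hweight : ∀ σ ∈ F, 0 ≤ (1 + (supNorm σ.1 - L))⁻¹ ^ 3 := fun σ hσ => by
    have := lt_supNorm_of_notMem_Lam (hF σ hσ)
    positivity
  calc ∑ σ ∈ F, √(∫ x in Lam L, ‖(w (σ.1 : R2) σ.2 : R2 → ℂ) x‖ ^ 2)
      ≤ c * ∑ σ ∈ F, (1 + (supNorm σ.1 - L))⁻¹ ^ 3 := by
        rw [Finset.mul_sum]
        refine Finset.sum_le_sum fun σ hσ => ?_
        exact sqrt_setIntegral_Lam_le_of_localized (by linarith) (le_max_right M 0) (hF σ hσ)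
          ((hloc _ σ.1.2 σ.2).trans (ENNReal.ofReal_le_ofReal (le_max_left M 0)))
    _ ≤ c * (mStar * ∑ γ ∈ Ξ, (1 + (supNorm γ - L))⁻¹ ^ 3) := by
        gcongr
        exact sum_comp_sigma_fst_le hm F (g := fun γ => (1 + (supNorm γ - L))⁻¹ ^ 3) hweight
    _ ≤ c * (mStar * (A * L)) := by gcongr; exact hA L hL Ξ hΞ hout
    _ ≤ max 1 (c * mStar * A) * L := by
        rw [← mul_assoc, ← mul_assoc]
        gcongr
        exact le_max_right _ _

/-- mass inside. For a GWB of an exponentially localized projection which is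
`s`-localized around an `r`-uniformly discrete set `𝔇` with `s > 5`, there is `I_MI > 0` such
that for every `L ≥ 1` the sum over `ξ ∈ 𝔇 \ Λ_L` (and `1 ≤ c ≤ m(ξ)`) of
`‖χ_{Λ_L} w_{ξ,c}‖_{L²}` is at most `I_MI · L`. -/
theorem statement_11
    (P : H2 →L[ℂ] H2) (hP : IsOrthProj P)
    (p : R2 → R2 → ℂ) (C β : ℝ) (hp : IsExpLocKernel p C β) (hker : HasKernel P p)
    (𝔇 : Set R2) (r : ℝ) (h𝔇 : UnifDiscrete 𝔇 r)
    (s : ℝ) (hs : 5 < s)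
    (m : R2 → ℕ) (mStar : ℕ) (w : (γ : R2) → Fin (m γ) → H2) (M : ℝ)
    (hGWB : IsGWB P 𝔇 m mStar w (fun t => (1 + t ^ 2) ^ s) M) :
    ∃ IMI : ℝ, 0 < IMI ∧ ∀ L : ℝ, 1 ≤ L →
      ∀ F : Finset (WIdx 𝔇 m), (∀ σ ∈ F, (σ.1 : R2) ∉ Lam L) →
        ∑ σ ∈ F, Real.sqrt (∫ x in Lam L, ‖(w (σ.1 : R2) σ.2 : R2 → ℂ) x‖ ^ 2)
          ≤ IMI * L :=
  statement_11_general P 𝔇 r h𝔇 s hs m mStar w M hGWB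

end
end
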